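/- arXiv:2108.04985 — 2 statements merged into one kernel-verified Lean document; each statement's English description precedes it below -/
import Mathlib

section
/- Let g ∈ 𝒮(ℝᵈ) with g real-valued and ‖g‖_{L²} = 1, and let f, h ∈ 𝒮(ℝᵈ). Then V_g(f·h)(x, ω) = ∫_{ℝ^{3d}} conj(g^(ω′ + ω″ − ω)) V_g f(x′, ω′) V_g h(x′, ω″) e^{2πi x·(ω′ + ω″ − ω)} dx′ dω′ dω″, i.e., the STFT of a pointwise product equals the Gabor product of the STFTs. -/
open MeasureTheory Complex

noncomputable section

abbrev Rd (d : ℕ) := EuclideanSpace ℝ (Fin d)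

/-- Fourier transform `f^(ω) = ∫ f(x) e^{-2πi x·ω} dx`. -/
def FT {d : ℕ} (f : Rd d → ℂ) (ω : Rd d) : ℂ :=
  ∫ x, f x * Complex.exp ((-2 * Real.pi * Complex.I) * ((inner ℝ x ω : ℝ) : ℂ))

/-- Short-time Fourier transform `V_g f(x,ω) = ∫ f(t) conj(g(t-x)) e^{-2πi ω·t} dt`. -/
def STFT {d : ℕ} (g f : Rd d → ℂ) (x ω : Rd d) : ℂ :=
  ∫ t, f t * (starRingEnd ℂ) (g (t - x)) *
    Complex.exp ((-2 * Real.pi * Complex.I) * ((inner ℝ ω t : ℝ) : ℂ))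

/-- The Gabor product `(F ♮_g H)(x,ω)`. -/
def gabor {d : ℕ} (g : Rd d → ℂ) (F H : Rd d × Rd d → ℂ) (x ω : Rd d) : ℂ :=
  ∫ xp, ∫ ωp, ∫ ωpp, (starRingEnd ℂ) (FT g (ωp + ωpp - ω)) * F (xp, ωp) * H (xp, ωpp) *
    Complex.exp ((2 * Real.pi * Complex.I) * ((inner ℝ x (ωp + ωpp - ω) : ℝ) : ℂ))

/-! For fixed `x'`, the STFT `V_g f(x', ·)` is the Fourier transform of `f · g(· - x')`, as `g`
is real. Since `conj ĝ(η) e^{2πi x·η}` is the Fourier transform of `g(· - x)` at `-η`, the inner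
`ω′, ω″`-integrals of the Gabor product are a double convolution of three Fourier transforms,
i.e. the Fourier transform of the product `f h g(· - x')² g(· - x)` at `ω`. Integrating over `x'`
by Fubini then produces the factor `∫ g² = ‖g‖₂² = 1`. -/

open FourierTransform SchwartzMap
open scoped RealInnerProductSpace

section Fourier

variable {V : Type*} [NormedAddCommGroup V] [InnerProductSpace ℝ V] [FiniteDimensional ℝ V]
  [MeasurableSpace V] [BorelSpace V]

theorem integrable_schwartz_mul (F : 𝓢(V, ℂ)) {ψ : V → ℂ} (hψ : Integrable ψ) :
    Integrable (fun t ↦ F t * ψ t) :=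
  hψ.bdd_mul F.continuous.aestronglyMeasurable (ae_of_all _ fun t ↦ norm_le_seminorm ℝ F t)

theorem integrable_conj_comp_sub_const {g : V → ℂ} (hg : Integrable g) (x : V) :
    Integrable (fun t ↦ starRingEnd ℂ (g (t - x))) :=
  Complex.conjCLE.toContinuousLinearMap.integrable_comp (hg.comp_sub_right x)

theorem fourier_comp_sub_const {E : Type*} [NormedAddCommGroup E] [NormedSpace ℂ E]
    (φ : V → E) (x ζ : V) :
    𝓕 (fun t ↦ φ (t - x)) ζ = 𝐞 (-⟪x, ζ⟫) • 𝓕 φ ζ := by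
  have := congrFun (VectorFourier.fourierIntegral_comp_add_right 𝐞 volume (innerₗ V) φ (-x)) ζ
  simp only [Function.comp_def, ← sub_eq_add_neg, map_neg, LinearMap.neg_apply] at this
  exact this

theorem conj_fourier (φ : V → ℂ) (η : V) :
    starRingEnd ℂ (𝓕 φ η) = 𝓕 (fun t ↦ starRingEnd ℂ (φ t)) (-η) := by
  simp only [Real.fourier_eq, ← integral_conj, Circle.smul_def, smul_eq_mul, map_mul,
    ← Circle.coe_inv_eq_conj, ← AddChar.map_neg_eq_inv, inner_neg_right, neg_neg]

theorem fourier_mul_eq_integral (F : 𝓢(V, ℂ)) {ψ : V → ℂ} (hψ : Integrable ψ) (ω : V) :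
    𝓕 (fun t ↦ F t * ψ t) ω = ∫ ω', 𝓕 (F : V → ℂ) ω' * 𝓕 ψ (ω - ω') := by
  have inversion (t : V) : ∫ ω', 𝐞 ⟪ω', t⟫ • 𝓕 (F : V → ℂ) ω' = F t := by
    rw [← Real.fourierInv_eq, ← fourier_coe, ← fourierInv_coe, fourierInv_fourier_eq]
  have hint : Integrable (fun p : V × V ↦ 𝐞 (-⟪p.1, ω - p.2⟫) • (ψ p.1 * 𝓕 (F : V → ℂ) p.2))
      (volume.prod volume) := by
    have h := hψ.mul_prod ((𝓕 F : 𝓢(V, ℂ)).integrable (μ := volume))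
    exact h.mono ((Real.continuous_fourierChar.comp (by fun_prop)).aestronglyMeasurable.smul
      h.aestronglyMeasurable) (ae_of_all _ fun p ↦ by simp [fourier_coe])
  calc 𝓕 (fun t ↦ F t * ψ t) ω
      = ∫ t, ∫ ω', 𝐞 (-⟪t, ω - ω'⟫) • (ψ t * 𝓕 (F : V → ℂ) ω') := by
        rw [Real.fourier_eq]
        congr 1 with t
        rw [← inversion t]
        simp only [Circle.smul_def, smul_eq_mul, ← integral_mul_const, ← integral_const_mul]
        congr 1 with ω'
        rw [inner_sub_right, real_inner_comm t ω', sub_eq_add_neg, neg_add, neg_neg,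
          AddChar.map_add_eq_mul, Circle.coe_mul]
        ring
    _ = ∫ ω', ∫ t, 𝐞 (-⟪t, ω - ω'⟫) • (ψ t * 𝓕 (F : V → ℂ) ω') := integral_integral_swap hint
    _ = ∫ ω', 𝓕 (F : V → ℂ) ω' * 𝓕 ψ (ω - ω') := by
        congr 1 with ω'
        rw [Real.fourier_eq ψ, ← integral_const_mul]
        congr 1 with t
        simp only [Circle.smul_def, smul_eq_mul]
        ring

theorem integral_integral_conj_fourier_mul_fourier_mul_fourier {g : V → ℂ} (hg : Integrable g)
    (F H : 𝓢(V, ℂ)) (x ω : V) :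
    ∫ ω', ∫ ω'', starRingEnd ℂ (𝓕 g (ω' + ω'' - ω)) * 𝓕 (F : V → ℂ) ω' * 𝓕 (H : V → ℂ) ω''
        * 𝐞 ⟪x, ω' + ω'' - ω⟫ =
      𝓕 (fun t ↦ F t * (H t * starRingEnd ℂ (g (t - x)))) ω := by
  have hG := integrable_conj_comp_sub_const hg x
  rw [fourier_mul_eq_integral F (integrable_schwartz_mul H hG)]
  congr 1 with ω'
  rw [fourier_mul_eq_integral H hG, ← integral_const_mul]
  congr 1 with ω''
  have hη : ω - ω' - ω'' = -(ω' + ω'' - ω) := by abel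
  rw [hη, fourier_comp_sub_const (fun t ↦ starRingEnd ℂ (g t)), ← conj_fourier, inner_neg_right,
    neg_neg, Circle.smul_def, smul_eq_mul]
  ring

theorem integral_integral_mul_comp_sub {ρ q : V → ℂ} (hρ : Integrable ρ) (hq : Integrable q) :
    ∫ x', ∫ t, ρ t * q (t - x') = (∫ t, ρ t) * ∫ u, q u := by
  have := integral_convolution (μ := volume) (ContinuousLinearMap.mul ℂ ℂ) hρ
    (hq.comp_neg (μ := volume))
  simp only [MeasureTheory.convolution, ContinuousLinearMap.mul_apply', neg_sub,
    integral_neg_eq_self (fun u ↦ q u)] at this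
  exact this

end Fourier

theorem integral_norm_sq_eq_one_of_eLpNorm_eq_one {α E : Type*} [MeasurableSpace α] {μ : Measure α}
    [NormedAddCommGroup E] {f : α → E} (hf : AEStronglyMeasurable f μ)
    (h : eLpNorm f 2 μ = 1) : ∫ x, ‖f x‖ ^ 2 ∂μ = 1 := by
  have := eLpNorm_nnreal_pow_eq_lintegral (f := f) (μ := μ) (p := 2) two_ne_zero
  simp only [ENNReal.coe_ofNat, h, NNReal.coe_ofNat, ENNReal.rpow_two] at this
  rw [integral_eq_lintegral_of_nonneg_ae (f := fun x ↦ ‖f x‖ ^ 2)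
    (ae_of_all _ fun x ↦ by positivity) (hf.norm.pow 2)]
  simp [ENNReal.ofReal_pow, ← this]

theorem integral_mul_self_eq_one {α : Type*} [MeasurableSpace α] {μ : Measure α} {g : α → ℂ}
    (hg : AEStronglyMeasurable g μ) (hreal : ∀ t, starRingEnd ℂ (g t) = g t)
    (hnorm : eLpNorm g 2 μ = 1) : ∫ t, g t * g t ∂μ = 1 := by
  have hsq (t : α) : g t * g t = ((‖g t‖ ^ 2 : ℝ) : ℂ) := by
    nth_rewrite 2 [← hreal t]
    rw [Complex.mul_conj', Complex.ofReal_pow]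
  simp only [hsq, integral_complex_ofReal, integral_norm_sq_eq_one_of_eLpNorm_eq_one hg hnorm,
    Complex.ofReal_one]

theorem exp_two_pi_I_mul_eq_fourierChar (r : ℝ) :
    Complex.exp ((2 * Real.pi * Complex.I) * (r : ℂ)) = 𝐞 r := by
  rw [Real.fourierChar_apply]
  push_cast
  ring_nf

theorem FT_eq_fourier {d : ℕ} (f : Rd d → ℂ) : FT f = 𝓕 f := by
  ext ω
  rw [FT, Real.fourier_eq']
  congr 1 with v
  rw [smul_eq_mul, mul_comm]
  congr 2
  push_cast
  ring

theorem STFT_eq_fourier {d : ℕ} (g f : Rd d → ℂ) (x : Rd d) :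
    STFT g f x = 𝓕 (fun t ↦ f t * starRingEnd ℂ (g (t - x))) := by
  ext ω
  rw [STFT, Real.fourier_eq']
  congr 1 with t
  rw [smul_eq_mul, mul_comm, real_inner_comm]
  congr 2
  push_cast
  ring

theorem stft_of_product_eq_gabor {d : ℕ} (g f h : SchwartzMap (Rd d) ℂ)
    (hreal : ∀ t, (starRingEnd ℂ) (g t) = g t)
    (hnorm : eLpNorm (⇑g) 2 (volume : Measure (Rd d)) = 1) :
    ∀ x ω : Rd d, STFT (⇑g) (fun t => f t * h t) x ω =
      gabor (⇑g) (fun p => STFT (⇑g) (⇑f) p.1 p.2) (fun p => STFT (⇑g) (⇑h) p.1 p.2) x ω := by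
  intro x ω
  let window (φ : 𝓢(Rd d, ℂ)) (a : Rd d) : 𝓢(Rd d, ℂ) :=
    pairing (ContinuousLinearMap.mul ℂ ℂ) φ (compSubConstCLM ℂ a g)
  have stft_eq (φ : 𝓢(Rd d, ℂ)) (a : Rd d) : STFT g φ a = 𝓕 ⇑(window φ a) := by
    simp only [STFT_eq_fourier, hreal]
    rfl
  set ρ : Rd d → ℂ := fun t ↦ 𝐞 (-⟪t, ω⟫) • (f t * (h t * starRingEnd ℂ (g (t - x))))
  have hρ : Integrable ρ := (Real.fourierIntegral_convergent_iff ω).2 <|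
    integrable_schwartz_mul f <| integrable_schwartz_mul h <|
      integrable_conj_comp_sub_const g.integrable x
  symm
  calc gabor g (fun p ↦ STFT g f p.1 p.2) (fun p ↦ STFT g h p.1 p.2) x ω
      = ∫ x', 𝓕 (fun t ↦ window f x' t * (window h x' t * starRingEnd ℂ (g (t - x)))) ω := by
        simp only [gabor, FT_eq_fourier, stft_eq, exp_two_pi_I_mul_eq_fourierChar,
          integral_integral_conj_fourier_mul_fourier_mul_fourier g.integrable]
    _ = ∫ x', ∫ t, ρ t * (g (t - x') * g (t - x')) := by
        congr 1 with x'
        rw [Real.fourier_eq]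
        congr 1 with t
        simp only [window, pairing_apply_apply, ContinuousLinearMap.mul_apply',
          compSubConstCLM_apply, ρ, Circle.smul_def, smul_eq_mul]
        ring
    _ = (∫ t, ρ t) * ∫ u, g u * g u :=
        integral_integral_mul_comp_sub (q := fun u ↦ g u * g u) hρ
          (integrable_schwartz_mul g g.integrable)
    _ = STFT g (fun t ↦ f t * h t) x ω := by
        rw [integral_mul_self_eq_one g.continuous.aestronglyMeasurable hreal hnorm, mul_one,
          STFT_eq_fourier, Real.fourier_eq]
        simp only [ρ, mul_assoc]
end
end

section
/- Let g ∈ 𝒮(ℝᵈ)∖{0}, F, H ∈ 𝒮(ℝ^{2d}), and u, v, η, ρ, σ ∈ ℝᵈ. Then the Gabor product satisfies the covariance property (M_{(η,−u)} T_{(v,ρ)} F) ♮_g (M_{(−η,−u)} T_{(v,σ)} H) = M_{(0,−u)} T_{(u, ρ+σ)} (F ♮_g H), where (T_{(u,η)} F)(x, ω) = F(x−u, ω−η) and (M_{(η,u)} F)(x, ω) = e^{2πi(x·η + ω·u)} F(x, ω). -/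
open MeasureTheory Complex

noncomputable section

/-- Translation on phase space. -/
def T2 {d : ℕ} (u η : Rd d) (F : Rd d × Rd d → ℂ) (p : Rd d × Rd d) : ℂ := F (p.1 - u, p.2 - η)

/-- Modulation on phase space. -/
def M2 {d : ℕ} (η u : Rd d) (F : Rd d × Rd d → ℂ) (p : Rd d × Rd d) : ℂ :=
  Complex.exp ((2 * Real.pi * Complex.I) * ((((inner ℝ p.1 η : ℝ) + (inner ℝ p.2 u : ℝ)) : ℝ) : ℂ)) * F p


/-! Substituting `x' ↦ x' + v`, `ω' ↦ ω' + ρ`, `ω'' ↦ ω'' + σ` in the three integrals removes the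
translations. The frequency shifts change the argument of `ĝ` from `ω' + ω'' - ω` to
`ω' + ω'' - (ω - (ρ + σ))`, the modulations by `±η` cancel, and the remaining phases recombine into
`e^{-2πi ω·u} e^{2πi (x - u)·(ω' + ω'' - (ω - (ρ + σ)))}`. -/

section TranslationInvariance

variable {G₁ G₂ G₃ : Type*} [AddGroup G₁] [AddGroup G₂] [AddGroup G₃]
  [MeasurableSpace G₁] [MeasurableSpace G₂] [MeasurableSpace G₃]
  [MeasurableAdd G₁] [MeasurableAdd G₂] [MeasurableAdd G₃]
  {μ₁ : Measure G₁} {μ₂ : Measure G₂} {μ₃ : Measure G₃}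
  [μ₁.IsAddRightInvariant] [μ₂.IsAddRightInvariant] [μ₃.IsAddRightInvariant]
  {E : Type*} [NormedAddCommGroup E] [NormedSpace ℝ E]

theorem integral_integral_integral_add_right_eq_self (f : G₁ → G₂ → G₃ → E) (a : G₁) (b : G₂)
    (c : G₃) :
    ∫ x, ∫ y, ∫ z, f (x + a) (y + b) (z + c) ∂μ₃ ∂μ₂ ∂μ₁ = ∫ x, ∫ y, ∫ z, f x y z ∂μ₃ ∂μ₂ ∂μ₁ := by
  rw [integral_add_right_eq_self (fun x => ∫ y, ∫ z, f x (y + b) (z + c) ∂μ₃ ∂μ₂) a]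
  congr 1 with x
  rw [integral_add_right_eq_self (fun y => ∫ z, f x y (z + c) ∂μ₃) b]
  congr 1 with y
  exact integral_add_right_eq_self (f x y) c

end TranslationInvariance

theorem inner_phase_covariance {E : Type*} [NormedAddCommGroup E] [InnerProductSpace ℝ E]
    (x ω u v η ρ σ y ξ ζ : E) :
    (inner ℝ (y + v) η + inner ℝ (ξ + ρ) (-u)) + (inner ℝ (y + v) (-η) + inner ℝ (ζ + σ) (-u))
        + inner ℝ x (ξ + ρ + (ζ + σ) - ω) =
      (inner ℝ x (0 : E) + inner ℝ ω (-u)) + inner ℝ (x - u) (ξ + ζ - (ω - (ρ + σ))) := by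
  simp only [inner_add_left, inner_add_right, inner_sub_left, inner_sub_right,
    inner_neg_right, inner_zero_right, real_inner_comm u]
  ring

theorem exp_two_pi_I_mul_add (a b : ℝ) :
    exp (2 * Real.pi * I * (a : ℂ)) * exp (2 * Real.pi * I * (b : ℂ)) =
      exp (2 * Real.pi * I * ((a + b : ℝ) : ℂ)) := by
  rw [← exp_add, ← mul_add, ofReal_add]

theorem gabor_integrand_covariance {d : ℕ} (g : Rd d → ℂ) (F H : Rd d × Rd d → ℂ)
    (x ω u v η ρ σ y ξ ζ : Rd d) :
    starRingEnd ℂ (FT g (ξ + ρ + (ζ + σ) - ω)) * M2 η (-u) (T2 v ρ F) (y + v, ξ + ρ) *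
        M2 (-η) (-u) (T2 v σ H) (y + v, ζ + σ) *
        exp (2 * Real.pi * I * ((inner ℝ x (ξ + ρ + (ζ + σ) - ω) : ℝ) : ℂ)) =
      exp (2 * Real.pi * I * (((inner ℝ x (0 : Rd d) + inner ℝ ω (-u) : ℝ)) : ℂ)) *
        (starRingEnd ℂ (FT g (ξ + ζ - (ω - (ρ + σ)))) * F (y, ξ) * H (y, ζ) *
          exp (2 * Real.pi * I * ((inner ℝ (x - u) (ξ + ζ - (ω - (ρ + σ))) : ℝ) : ℂ))) := by
  have hfreq : ξ + ρ + (ζ + σ) - ω = ξ + ζ - (ω - (ρ + σ)) := by abel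
  have hphase := congrArg (fun t : ℝ => exp (2 * Real.pi * I * (t : ℂ)))
    (inner_phase_covariance x ω u v η ρ σ y ξ ζ)
  rw [← exp_two_pi_I_mul_add _ (inner ℝ x _), ← exp_two_pi_I_mul_add (inner ℝ (y + v) η + _),
    ← exp_two_pi_I_mul_add _ (inner ℝ (x - u) _)] at hphase
  simp only [M2, T2, add_sub_cancel_right]
  rw [hfreq] at hphase ⊢
  linear_combination
    starRingEnd ℂ (FT g (ξ + ζ - (ω - (ρ + σ)))) * F (y, ξ) * H (y, ζ) * hphase

theorem gabor_covariance_general {d : ℕ} (g : SchwartzMap (Rd d) ℂ)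
    (F H : SchwartzMap (Rd d × Rd d) ℂ) (u v η ρ σ : Rd d) :
    ∀ x ω : Rd d,
      gabor (⇑g) (M2 η (-u) (T2 v ρ (⇑F))) (M2 (-η) (-u) (T2 v σ (⇑H))) x ω =
        M2 0 (-u) (T2 u (ρ + σ) (fun p => gabor (⇑g) (⇑F) (⇑H) p.1 p.2)) (x, ω) := by
  intro x ω
  rw [gabor, ← integral_integral_integral_add_right_eq_self _ v ρ σ]
  simp only [gabor_integrand_covariance, integral_const_mul]
  rw [M2, T2, gabor]

theorem gabor_covariance {d : ℕ} (g : SchwartzMap (Rd d) ℂ) (hg : ⇑g ≠ 0)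
    (F H : SchwartzMap (Rd d × Rd d) ℂ) (u v η ρ σ : Rd d) :
    ∀ x ω : Rd d,
      gabor (⇑g) (M2 η (-u) (T2 v ρ (⇑F))) (M2 (-η) (-u) (T2 v σ (⇑H))) x ω =
        M2 0 (-u) (T2 u (ρ + σ) (fun p => gabor (⇑g) (⇑F) (⇑H) p.1 p.2)) (x, ω) :=
  gabor_covariance_general g F H u v η ρ σ
end
end
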